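/- arXiv:2502.12104 — 3 statements merged into one kernel-verified Lean document; each statement's English description precedes it below -/
import Mathlib

section
/- Let d ≥ 1 and let h : ℤ^d → ℝ satisfy |h(x) − δ_{0,x}| ≤ ε(δ_{0,x} + w(x)) for all x, where w : ℤ^d → [0,∞), w(0) = 0, and suppose the closed estimate |(f₁*f₂)(x)| ≤ C(δ_{0,x} + w(x)) holds whenever |f_j(x)| ≤ δ_{0,x} + w(x) (j=1,2). If Cε < 1, then the Neumann series ∑_{n=0}^∞ (δ − h)^{*n}(x) converges absolutely for every x, defining a convolution inverse h^{−1} of h (i.e. h * h^{−1} = δ), and |δ_{0,x} − h^{−1}(x)| ≤ (ε/(1−Cε))(δ_{0,x} + w(x)) for all x. -/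
/-- Discrete convolution on `ℤ^d`. -/
noncomputable def conv' {d : ℕ} (f g : (Fin d → ℤ) → ℝ) : (Fin d → ℤ) → ℝ :=
  fun x => ∑' y, f (x - y) * g y

/-- `n`-fold convolution power: `f^{*0} = δ`, `f^{*(n+1)} = f * f^{*n}`. -/
noncomputable def iterConv {d : ℕ} (f : (Fin d → ℤ) → ℝ) : ℕ → (Fin d → ℤ) → ℝ
  | 0 => fun x => if x = 0 then 1 else 0
  | n + 1 => conv' f (iterConv f n)

lemma conv_delta {d : ℕ} (f : (Fin d → ℤ) → ℝ) (x : Fin d → ℤ) :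
    conv' f (fun z => if z = 0 then 1 else 0) x = f x := by
  unfold conv'
  rw [tsum_eq_single 0 ?_]
  · simp
  · intro y hy; simp [hy]

lemma key_summable {d : ℕ} {w : (Fin d → ℤ) → ℝ} (hwpos : ∀ x, 0 ≤ w x) {C : ℝ}
    (hclosed : ∀ f₁ f₂ : (Fin d → ℤ) → ℝ,
      (∀ x, |f₁ x| ≤ (if x = 0 then 1 else 0) + w x) →
      (∀ x, |f₂ x| ≤ (if x = 0 then 1 else 0) + w x) →
      ∀ x, |conv' f₁ f₂ x| ≤ C * ((if x = 0 then 1 else 0) + w x))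
    {f₁ f₂ : (Fin d → ℤ) → ℝ}
    (h₁ : ∀ x, |f₁ x| ≤ (if x = 0 then 1 else 0) + w x)
    (h₂ : ∀ x, |f₂ x| ≤ (if x = 0 then 1 else 0) + w x) (x : Fin d → ℤ) :
    Summable fun y => |f₁ (x - y) * f₂ y| := by
  apply summable_of_sum_le (c := C * ((if x = 0 then 1 else 0) + w x))
    (fun y => abs_nonneg _)
  intro u
  set f₃ : (Fin d → ℤ) → ℝ :=
    fun y => if y ∈ u then (if 0 ≤ f₁ (x - y) * f₂ y then f₂ y else -f₂ y) else 0 with hf₃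
  have h₃ : ∀ z, |f₃ z| ≤ (if z = 0 then 1 else 0) + w z := by
    intro z
    have hz := h₂ z
    by_cases hmem : z ∈ u
    · simp only [hf₃, if_pos hmem]
      by_cases hsgn : 0 ≤ f₁ (x - z) * f₂ z
      · rw [if_pos hsgn]; exact hz
      · rw [if_neg hsgn, abs_neg]; exact hz
    · simp only [hf₃, if_neg hmem, abs_zero]
      exact le_trans (abs_nonneg _) hz
  have hb := hclosed f₁ f₃ h₁ h₃ x
  have hc : conv' f₁ f₃ x = ∑ y ∈ u, |f₁ (x - y) * f₂ y| := by
    simp only [conv']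
    rw [tsum_eq_sum (s := u) ?_]
    · refine Finset.sum_congr rfl (fun y hy => ?_)
      simp only [hf₃, if_pos hy]
      by_cases hsgn : 0 ≤ f₁ (x - y) * f₂ y
      · rw [if_pos hsgn, abs_of_nonneg hsgn]
      · rw [if_neg hsgn, abs_of_neg (lt_of_not_ge hsgn)]; ring
    · intro y hy; simp [hf₃, hy]
  calc ∑ y ∈ u, |f₁ (x - y) * f₂ y| = conv' f₁ f₃ x := hc.symm
    _ ≤ |conv' f₁ f₃ x| := le_abs_self _
    _ ≤ C * ((if x = 0 then 1 else 0) + w x) := hb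

lemma scaled {d : ℕ} {w : (Fin d → ℤ) → ℝ} (hwpos : ∀ x, 0 ≤ w x) {C : ℝ}
    (hclosed : ∀ f₁ f₂ : (Fin d → ℤ) → ℝ,
      (∀ x, |f₁ x| ≤ (if x = 0 then 1 else 0) + w x) →
      (∀ x, |f₂ x| ≤ (if x = 0 then 1 else 0) + w x) →
      ∀ x, |conv' f₁ f₂ x| ≤ C * ((if x = 0 then 1 else 0) + w x))
    {a b : ℝ} (ha : 0 ≤ a) (hb : 0 ≤ b)
    {f₁ f₂ : (Fin d → ℤ) → ℝ}
    (h₁ : ∀ x, |f₁ x| ≤ a * ((if x = 0 then 1 else 0) + w x))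
    (h₂ : ∀ x, |f₂ x| ≤ b * ((if x = 0 then 1 else 0) + w x)) (x : Fin d → ℤ) :
    Summable (fun y => |f₁ (x - y) * f₂ y|) ∧
      |conv' f₁ f₂ x| ≤ a * b * C * ((if x = 0 then 1 else 0) + w x) := by
  rcases eq_or_lt_of_le ha with rfl | ha'
  · have hf₁ : ∀ z, f₁ z = 0 :=
      fun z => abs_eq_zero.mp (le_antisymm (by simpa using h₁ z) (abs_nonneg _))
    constructor
    · have : (fun y => |f₁ (x - y) * f₂ y|) = fun _ => (0:ℝ) := by
        funext y; simp [hf₁]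
      rw [this]; exact summable_zero
    · have : conv' f₁ f₂ x = 0 := by simp [conv', hf₁]
      rw [this]; simp
  rcases eq_or_lt_of_le hb with rfl | hb'
  · have hf₂ : ∀ z, f₂ z = 0 :=
      fun z => abs_eq_zero.mp (le_antisymm (by simpa using h₂ z) (abs_nonneg _))
    constructor
    · have : (fun y => |f₁ (x - y) * f₂ y|) = fun _ => (0:ℝ) := by
        funext y; simp [hf₂]
      rw [this]; exact summable_zero
    · have : conv' f₁ f₂ x = 0 := by simp [conv', hf₂]
      rw [this]; simp
  have ha0 : a ≠ 0 := ne_of_gt ha'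
  have hb0 : b ≠ 0 := ne_of_gt hb'
  set g₁ : (Fin d → ℤ) → ℝ := fun z => a⁻¹ * f₁ z with hg₁
  set g₂ : (Fin d → ℤ) → ℝ := fun z => b⁻¹ * f₂ z with hg₂
  have hb₁ : ∀ z, |g₁ z| ≤ (if z = 0 then 1 else 0) + w z := by
    intro z
    calc |g₁ z| = a⁻¹ * |f₁ z| := by
          simp only [hg₁]; rw [abs_mul, abs_of_pos (inv_pos.mpr ha')]
      _ ≤ a⁻¹ * (a * ((if z = 0 then 1 else 0) + w z)) :=
          mul_le_mul_of_nonneg_left (h₁ z) (le_of_lt (inv_pos.mpr ha'))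
      _ = (if z = 0 then 1 else 0) + w z := inv_mul_cancel_left₀ ha0 _
  have hb₂ : ∀ z, |g₂ z| ≤ (if z = 0 then 1 else 0) + w z := by
    intro z
    calc |g₂ z| = b⁻¹ * |f₂ z| := by
          simp only [hg₂]; rw [abs_mul, abs_of_pos (inv_pos.mpr hb')]
      _ ≤ b⁻¹ * (b * ((if z = 0 then 1 else 0) + w z)) :=
          mul_le_mul_of_nonneg_left (h₂ z) (le_of_lt (inv_pos.mpr hb'))
      _ = (if z = 0 then 1 else 0) + w z := inv_mul_cancel_left₀ hb0 _
  have hkey := key_summable hwpos hclosed hb₁ hb₂ x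
  have hrw : ∀ y, f₁ (x - y) * f₂ y = (a * b) * (g₁ (x - y) * g₂ y) := by
    intro y; simp only [hg₁, hg₂]; field_simp
  constructor
  · have : (fun y => |f₁ (x - y) * f₂ y|) = fun y => (a * b) * |g₁ (x - y) * g₂ y| := by
      funext y; rw [hrw y, abs_mul, abs_of_pos (mul_pos ha' hb')]
    rw [this]
    exact hkey.mul_left _
  · have hcv : conv' f₁ f₂ x = (a * b) * conv' g₁ g₂ x := by
      simp only [conv']
      rw [← tsum_mul_left]
      exact tsum_congr hrw
    rw [hcv, abs_mul, abs_of_pos (mul_pos ha' hb')]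
    have hcl := hclosed g₁ g₂ hb₁ hb₂ x
    calc a * b * |conv' g₁ g₂ x|
        ≤ a * b * (C * ((if x = 0 then 1 else 0) + w x)) :=
          mul_le_mul_of_nonneg_left hcl (by positivity)
      _ = a * b * C * ((if x = 0 then 1 else 0) + w x) := by ring

set_option maxHeartbeats 2000000 in
/-- Neumann series inversion. If `|h − δ| ≤ ε(δ + w)`, the closed convolution
estimate holds with constant `C`, and `Cε < 1`, then `∑_n (δ−h)^{*n}` converges absolutely,
defines a convolution inverse `h⁻¹` of `h`, and `|δ − h⁻¹| ≤ (ε/(1−Cε))(δ + w)`. -/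
theorem stmt10 (d : ℕ) (h : (Fin d → ℤ) → ℝ) (w : (Fin d → ℤ) → ℝ)
    (hw0 : w 0 = 0) (hwpos : ∀ x, 0 ≤ w x) (ε C : ℝ)
    (hh : ∀ x : Fin d → ℤ,
      |h x - (if x = 0 then 1 else 0)| ≤ ε * ((if x = 0 then 1 else 0) + w x))
    (hclosed : ∀ f₁ f₂ : (Fin d → ℤ) → ℝ,
      (∀ x, |f₁ x| ≤ (if x = 0 then 1 else 0) + w x) →
      (∀ x, |f₂ x| ≤ (if x = 0 then 1 else 0) + w x) →
      ∀ x, |conv' f₁ f₂ x| ≤ C * ((if x = 0 then 1 else 0) + w x))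
    (hCε : C * ε < 1) :
    (∀ x : Fin d → ℤ,
      Summable (fun n : ℕ => |iterConv (fun y => (if y = 0 then 1 else 0) - h y) n x|)) ∧
    (∀ x : Fin d → ℤ,
      conv' h (fun y => ∑' n : ℕ, iterConv (fun z => (if z = 0 then 1 else 0) - h z) n y) x =
        (if x = 0 then 1 else 0)) ∧
    (∀ x : Fin d → ℤ,
      |(if x = 0 then 1 else 0) -
          ∑' n : ℕ, iterConv (fun z => (if z = 0 then 1 else 0) - h z) n x| ≤
        (ε / (1 - C * ε)) * ((if x = 0 then 1 else 0) + w x)) := by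
  set g : (Fin d → ℤ) → ℝ := fun y => (if y = 0 then 1 else 0) - h y with hgdef
  have hε : 0 ≤ ε := by
    have h0 := hh 0
    simp [hw0] at h0
    have := abs_nonneg (h 0 - 1)
    linarith
  have hδb : ∀ z : Fin d → ℤ, |(if z = 0 then (1:ℝ) else 0)| ≤ (if z = 0 then 1 else 0) + w z := by
    intro z
    have := hwpos z
    by_cases hz : z = 0 <;> simp [hz] <;> linarith
  have hC1 : (1:ℝ) ≤ C := by
    have h1 : conv' (fun z : Fin d → ℤ => if z = 0 then (1:ℝ) else 0)
        (fun z => if z = 0 then 1 else 0) 0 = 1 := by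
      rw [conv_delta]; simp
    have h2 := hclosed _ _ hδb hδb 0
    rw [h1] at h2
    simpa [hw0] using h2
  have hρ0 : 0 ≤ C * ε := mul_nonneg (by linarith) hε
  have hg : ∀ z, |g z| ≤ ε * ((if z = 0 then 1 else 0) + w z) := by
    intro z
    simp only [hgdef]
    rw [abs_sub_comm]
    exact hh z
  have hiter0 : iterConv g 0 = fun z : Fin d → ℤ => if z = 0 then (1:ℝ) else 0 := rfl
  have hiterS : ∀ n, iterConv g (n + 1) = conv' g (iterConv g n) := fun n => by
    rw [iterConv]
  have bound1 : ∀ n, ∀ z : Fin d → ℤ,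
      |iterConv g (n + 1) z| ≤ ε * (C * ε) ^ n * ((if z = 0 then 1 else 0) + w z) := by
    intro n
    induction n with
    | zero =>
      intro z
      have h1 : iterConv g 1 z = g z := by rw [hiterS 0, hiter0, conv_delta]
      rw [h1]
      simpa using hg z
    | succ n ih =>
      intro z
      have hb := (scaled hwpos hclosed hε (by positivity : (0:ℝ) ≤ ε * (C * ε) ^ n) hg ih z).2
      rw [hiterS (n + 1)]
      calc |conv' g (iterConv g (n + 1)) z|
          ≤ ε * (ε * (C * ε) ^ n) * C * ((if z = 0 then 1 else 0) + w z) := hb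
        _ = ε * (C * ε) ^ (n + 1) * ((if z = 0 then 1 else 0) + w z) := by ring
  have hK : ∀ z : Fin d → ℤ, 0 ≤ (if z = 0 then (1:ℝ) else 0) + w z :=
    fun z => le_trans (abs_nonneg _) (hδb z)
  have bound0 : ∀ n, ∀ z : Fin d → ℤ,
      |iterConv g n z| ≤ (C * ε) ^ n * ((if z = 0 then 1 else 0) + w z) := by
    intro n z
    cases n with
    | zero => simpa [iterConv] using hδb z
    | succ n =>
      have h2 : ε * (C * ε) ^ n ≤ (C * ε) ^ (n + 1) := by
        calc ε * (C * ε) ^ n ≤ (C * ε) * (C * ε) ^ n :=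
              mul_le_mul_of_nonneg_right (le_mul_of_one_le_left hε hC1) (pow_nonneg hρ0 n)
          _ = (C * ε) ^ (n + 1) := by ring
      calc |iterConv g (n + 1) z| ≤ ε * (C * ε) ^ n * ((if z = 0 then 1 else 0) + w z) :=
            bound1 n z
        _ ≤ (C * ε) ^ (n + 1) * ((if z = 0 then 1 else 0) + w z) :=
            mul_le_mul_of_nonneg_right h2 (hK z)
  have habs_summ : ∀ z : Fin d → ℤ, Summable fun n : ℕ => |iterConv g n z| := by
    intro z
    exact Summable.of_nonneg_of_le (fun n => abs_nonneg _) (fun n => bound0 n z)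
      ((summable_geometric_of_lt_one hρ0 hCε).mul_right _)
  have hsumm : ∀ z : Fin d → ℤ, Summable fun n : ℕ => iterConv g n z :=
    fun z => summable_abs_iff.mp (habs_summ z)
  set S : (Fin d → ℤ) → ℝ := fun z => ∑' n : ℕ, iterConv g n z with hSdef
  have htail : ∀ z : Fin d → ℤ, Summable fun n : ℕ => |iterConv g (n + 1) z| :=
    fun z => (summable_nat_add_iff 1).mpr (habs_summ z)
  have hSsplit : ∀ z : Fin d → ℤ,
      S z = (if z = 0 then 1 else 0) + ∑' n : ℕ, iterConv g (n + 1) z := by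
    intro z
    simp only [hSdef]
    rw [Summable.tsum_eq_zero_add (hsumm z)]
    simp only [hiter0]
  have hthird : ∀ z : Fin d → ℤ,
      |(if z = 0 then (1:ℝ) else 0) - S z| ≤
        ε / (1 - C * ε) * ((if z = 0 then 1 else 0) + w z) := by
    intro z
    rw [hSsplit z]
    have he : (if z = 0 then (1:ℝ) else 0) -
        ((if z = 0 then 1 else 0) + ∑' n : ℕ, iterConv g (n + 1) z) =
        -(∑' n : ℕ, iterConv g (n + 1) z) := by ring
    rw [he, abs_neg]
    have h1 : |∑' n : ℕ, iterConv g (n + 1) z| ≤ ∑' n : ℕ, |iterConv g (n + 1) z| := by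
      simpa [Real.norm_eq_abs] using
        norm_tsum_le_tsum_norm (f := fun n : ℕ => iterConv g (n + 1) z)
          (by simpa [Real.norm_eq_abs] using htail z)
    have h2 : ∑' n : ℕ, |iterConv g (n + 1) z| ≤
        ∑' n : ℕ, ε * ((if z = 0 then 1 else 0) + w z) * (C * ε) ^ n := by
      refine Summable.tsum_le_tsum (fun n => ?_) (htail z)
        ((summable_geometric_of_lt_one hρ0 hCε).mul_left _)
      calc |iterConv g (n + 1) z| ≤ ε * (C * ε) ^ n * ((if z = 0 then 1 else 0) + w z) :=
            bound1 n z
        _ = ε * ((if z = 0 then 1 else 0) + w z) * (C * ε) ^ n := by ring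
    have h3 : ∑' n : ℕ, ε * ((if z = 0 then 1 else 0) + w z) * (C * ε) ^ n =
        ε * ((if z = 0 then 1 else 0) + w z) * (1 - C * ε)⁻¹ := by
      rw [tsum_mul_left, tsum_geometric_of_lt_one hρ0 hCε]
    calc |∑' n : ℕ, iterConv g (n + 1) z| ≤
          ∑' n : ℕ, ε * ((if z = 0 then 1 else 0) + w z) * (C * ε) ^ n := le_trans h1 h2
      _ = ε * ((if z = 0 then 1 else 0) + w z) * (1 - C * ε)⁻¹ := h3
      _ = ε / (1 - C * ε) * ((if z = 0 then 1 else 0) + w z) := by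
            rw [div_eq_mul_inv]; ring
  have hinv : ∀ x : Fin d → ℤ, conv' h S x = (if x = 0 then 1 else 0) := by
    intro x
    have hslice_n : ∀ n : ℕ, Summable fun y => |g (x - y) * iterConv g n y| :=
      fun n => (scaled hwpos hclosed hε (pow_nonneg hρ0 n) hg (bound0 n) x).1
    have hslice_y : ∀ y, Summable fun n : ℕ => |g (x - y) * iterConv g n y| := by
      intro y
      refine Summable.of_nonneg_of_le (fun n => abs_nonneg _) (fun n => ?_)
        ((((summable_geometric_of_lt_one hρ0 hCε).mul_right
          ((if y = 0 then 1 else 0) + w y))).mul_left |g (x - y)|)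
      rw [abs_mul]
      exact mul_le_mul_of_nonneg_left (bound0 n y) (abs_nonneg _)
    have hsum_tsum_y : Summable fun y => ∑' n : ℕ, |g (x - y) * iterConv g n y| := by
      have hKb : ∀ z : Fin d → ℤ,
          |(if z = 0 then (1:ℝ) else 0) + w z| ≤ 1 * ((if z = 0 then 1 else 0) + w z) := by
        intro z; rw [abs_of_nonneg (hK z), one_mul]
      have hmaj : Summable fun y =>
          |g (x - y) * ((if y = 0 then 1 else 0) + w y)| * (1 - C * ε)⁻¹ :=
        Summable.mul_right _ ((scaled hwpos hclosed hε zero_le_one hg hKb x).1)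
      refine Summable.of_nonneg_of_le
        (fun y => tsum_nonneg (fun n => abs_nonneg _)) (fun y => ?_) hmaj
      have hb : ∑' n : ℕ, |g (x - y) * iterConv g n y| ≤
          ∑' n : ℕ, |g (x - y)| * ((if y = 0 then 1 else 0) + w y) * (C * ε) ^ n := by
        refine Summable.tsum_le_tsum (fun n => ?_) (hslice_y y)
          (Summable.mul_left _ (summable_geometric_of_lt_one hρ0 hCε))
        rw [abs_mul]
        calc |g (x - y)| * |iterConv g n y|
            ≤ |g (x - y)| * ((C * ε) ^ n * ((if y = 0 then 1 else 0) + w y)) :=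
              mul_le_mul_of_nonneg_left (bound0 n y) (abs_nonneg _)
          _ = |g (x - y)| * ((if y = 0 then 1 else 0) + w y) * (C * ε) ^ n := by ring
      calc ∑' n : ℕ, |g (x - y) * iterConv g n y| ≤
            ∑' n : ℕ, |g (x - y)| * ((if y = 0 then 1 else 0) + w y) * (C * ε) ^ n := hb
        _ = |g (x - y)| * ((if y = 0 then 1 else 0) + w y) * (1 - C * ε)⁻¹ := by
              rw [tsum_mul_left, tsum_geometric_of_lt_one hρ0 hCε]
        _ = |g (x - y) * ((if y = 0 then 1 else 0) + w y)| * (1 - C * ε)⁻¹ := by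
              rw [abs_mul, abs_of_nonneg (hK y)]
    have hprod : Summable fun p : (Fin d → ℤ) × ℕ => |g (x - p.1) * iterConv g p.2 p.1| := by
      exact (summable_prod_of_nonneg (fun p => abs_nonneg _)).mpr ⟨hslice_y, hsum_tsum_y⟩
    have huncur : Summable
        (Function.uncurry fun (y : Fin d → ℤ) (n : ℕ) => g (x - y) * iterConv g n y) :=
      summable_abs_iff.mp hprod
    have hswap := Summable.tsum_comm' (f := fun (y : Fin d → ℤ) (n : ℕ) => g (x - y) * iterConv g n y)
      huncur (fun y => summable_abs_iff.mp (hslice_y y))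
      (fun n => summable_abs_iff.mp (hslice_n n))
    have hconv_n : ∀ n : ℕ, ∑' y, g (x - y) * iterConv g n y = iterConv g (n + 1) x :=
      fun n => by rw [iterConv]; rfl
    have hSy : ∀ y, g (x - y) * S y = ∑' n : ℕ, g (x - y) * iterConv g n y := by
      intro y
      rw [tsum_mul_left]
      try simp only [hSdef]
    have hsummable_gS : Summable fun y => g (x - y) * S y := by
      refine Summable.of_norm_bounded hsum_tsum_y (fun y => ?_)
      rw [hSy y, Real.norm_eq_abs]
      simpa [Real.norm_eq_abs, abs_mul] using
        norm_tsum_le_tsum_norm (f := fun n : ℕ => g (x - y) * iterConv g n y)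
          (by simpa [Real.norm_eq_abs, abs_mul] using hslice_y y)
    have hsummable_dS : Summable fun y => (if x - y = 0 then (1:ℝ) else 0) * S y := by
      apply summable_of_ne_finset_zero (s := ({x} : Finset (Fin d → ℤ)))
      intro y hy
      have hyx : y ≠ x := by simpa using hy
      have hne : x - y ≠ 0 := sub_ne_zero_of_ne (Ne.symm hyx)
      simp [hne]
    have hrw : ∀ y, h (x - y) * S y =
        (if x - y = 0 then (1:ℝ) else 0) * S y - g (x - y) * S y := by
      intro y
      simp only [hgdef]
      ring
    calc conv' h S x = ∑' y, h (x - y) * S y := rfl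
      _ = ∑' y, ((if x - y = 0 then (1:ℝ) else 0) * S y - g (x - y) * S y) := tsum_congr hrw
      _ = (∑' y, (if x - y = 0 then (1:ℝ) else 0) * S y) - ∑' y, g (x - y) * S y :=
            Summable.tsum_sub hsummable_dS hsummable_gS
      _ = S x - ∑' y, g (x - y) * S y := by
            congr 1
            rw [tsum_eq_single x ?_]
            · simp
            · intro y hy
              have hne : x - y ≠ 0 := sub_ne_zero_of_ne (Ne.symm hy)
              simp [hne]
      _ = S x - ∑' (y) (n : ℕ), g (x - y) * iterConv g n y := by rw [tsum_congr hSy]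
      _ = S x - ∑' (n : ℕ) (y), g (x - y) * iterConv g n y := by rw [hswap]
      _ = S x - ∑' n : ℕ, iterConv g (n + 1) x := by rw [tsum_congr hconv_n]
      _ = (if x = 0 then 1 else 0) := by rw [hSsplit x]; ring
  exact ⟨habs_summ, hinv, hthird⟩
end

section
/- Let μ ∈ [0,1] and let D̃ : ℤ^d → [0,∞) be a probability distribution with D̃(0) = 0. Suppose H₁, H₂ ∈ ℓ²(ℤ^d) both solve S = δ + μ D̃ * S, where the convolutions D̃ * H_j are absolutely convergent and again in ℓ². Then H₁ = H₂. -/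
/-- uniqueness of `ℓ²` solutions of `S = δ + μ D̃ * S` for `μ ∈ [0,1]` and a
probability distribution `D̃` with `D̃(0) = 0` (the convolutions being absolutely convergent
and again in `ℓ²`). This covers the critical case `μ = 1`. -/
theorem stmt13 (d : ℕ) (hd : 1 ≤ d) (μ : ℝ) (hμ : μ ∈ Set.Icc (0 : ℝ) 1)
    (Dt : (Fin d → ℤ) → ℝ) (hDpos : ∀ x, 0 ≤ Dt x) (hDsum : ∑' x, Dt x = 1)
    (hD0 : Dt 0 = 0)
    (H₁ H₂ : (Fin d → ℤ) → ℝ)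
    (h1 : Summable (fun x => (H₁ x) ^ 2)) (h2 : Summable (fun x => (H₂ x) ^ 2))
    (habs1 : ∀ x : Fin d → ℤ, Summable (fun y => |Dt (x - y) * H₁ y|))
    (habs2 : ∀ x : Fin d → ℤ, Summable (fun y => |Dt (x - y) * H₂ y|))
    (hl2a : Summable (fun x => (conv' Dt H₁ x) ^ 2))
    (hl2b : Summable (fun x => (conv' Dt H₂ x) ^ 2))
    (e1 : ∀ x : Fin d → ℤ, H₁ x = (if x = 0 then 1 else 0) + μ * conv' Dt H₁ x)
    (e2 : ∀ x : Fin d → ℤ, H₂ x = (if x = 0 then 1 else 0) + μ * conv' Dt H₂ x) :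
    H₁ = H₂ := by
  classical
  obtain ⟨hμ0, hμ1⟩ := hμ
  rcases hμ0.eq_or_lt with hz | hμpos
  · funext x
    have h1x := e1 x
    have h2x := e2 x
    rw [← hz, zero_mul, add_zero] at h1x h2x
    rw [h1x, h2x]
  -- basic facts about Dt
  have hDsummable : Summable Dt := by
    by_contra h
    rw [tsum_eq_zero_of_not_summable h] at hDsum
    norm_num at hDsum
  have hDle1 : ∀ z, Dt z ≤ 1 := by
    intro z
    rw [← hDsum]
    exact Summable.le_tsum hDsummable z fun _ _ => hDpos _
  set u : (Fin d → ℤ) → ℝ := fun x => H₁ x - H₂ x with hu_def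
  suffices hu0 : ∀ x, u x = 0 by
    funext x
    have := hu0 x
    simp only [hu_def] at this
    linarith
  -- summabilities for u
  have hs1 : ∀ x, Summable (fun y => Dt (x - y) * H₁ y) := fun x => (habs1 x).of_abs
  have hs2 : ∀ x, Summable (fun y => Dt (x - y) * H₂ y) := fun x => (habs2 x).of_abs
  have hmsum : ∀ x, Summable (fun y => Dt (x - y) * u y) := by
    intro x
    refine ((hs1 x).sub (hs2 x)).congr fun y => ?_
    simp only [hu_def]
    ring
  have hueq : ∀ x, u x = μ * ∑' y, Dt (x - y) * u y := by
    intro x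
    have hconv : conv' Dt H₁ x - conv' Dt H₂ x = ∑' y, Dt (x - y) * u y := by
      rw [conv', conv', ← Summable.tsum_sub (hs1 x) (hs2 x)]
      exact tsum_congr fun y => by simp only [hu_def]; ring
    simp only [hu_def]
    rw [e1 x, e2 x, ← hconv]
    ring
  have husq : Summable (fun x => u x ^ 2) := by
    refine Summable.of_nonneg_of_le (fun x => sq_nonneg _) (fun x => ?_)
      ((h1.mul_left 2).add (h2.mul_left 2))
    simp only [hu_def]
    nlinarith [sq_nonneg (H₁ x + H₂ x)]
  have hAsum : ∀ x, Summable (fun y => Dt (x - y) * u y ^ 2) := by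
    intro x
    refine Summable.of_nonneg_of_le (fun y => mul_nonneg (hDpos _) (sq_nonneg _))
      (fun y => ?_) husq
    exact mul_le_of_le_one_left (sq_nonneg _) (hDle1 _)
  have hDtransL : ∀ x, Summable (fun y => Dt (x - y)) := fun x =>
    ((Equiv.subLeft x).summable_iff (f := Dt)).mpr hDsummable
  have hDtransL_sum : ∀ x, ∑' y, Dt (x - y) = 1 := fun x =>
    ((Equiv.subLeft x).tsum_eq Dt).trans hDsum
  have hDtransR : ∀ y, Summable (fun x => Dt (x - y)) := fun y =>
    ((Equiv.subRight y).summable_iff (f := Dt)).mpr hDsummable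
  have hDtransR_sum : ∀ y, ∑' x, Dt (x - y) = 1 := fun y =>
    ((Equiv.subRight y).tsum_eq Dt).trans hDsum
  -- the variance identity
  have hVsum : ∀ x, Summable (fun y => Dt (x - y) * (u y - u x) ^ 2) := by
    intro x
    refine (((hAsum x).sub ((hmsum x).mul_left (2 * u x))).add
      ((hDtransL x).mul_left (u x ^ 2))).congr fun y => ?_
    ring
  have hVval : ∀ x, ∑' y, Dt (x - y) * (u y - u x) ^ 2
      = (∑' y, Dt (x - y) * u y ^ 2) - 2 * u x * (∑' y, Dt (x - y) * u y) + u x ^ 2 := by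
    intro x
    calc ∑' y, Dt (x - y) * (u y - u x) ^ 2
        = ∑' y, ((Dt (x - y) * u y ^ 2 - 2 * u x * (Dt (x - y) * u y))
            + u x ^ 2 * Dt (x - y)) := tsum_congr fun y => by ring
      _ = (∑' y, (Dt (x - y) * u y ^ 2 - 2 * u x * (Dt (x - y) * u y)))
            + ∑' y, u x ^ 2 * Dt (x - y) :=
          Summable.tsum_add ((hAsum x).sub ((hmsum x).mul_left _)) ((hDtransL x).mul_left _)
      _ = ((∑' y, Dt (x - y) * u y ^ 2) - ∑' y, 2 * u x * (Dt (x - y) * u y))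
            + u x ^ 2 * ∑' y, Dt (x - y) := by
          rw [Summable.tsum_sub (hAsum x) ((hmsum x).mul_left _), tsum_mul_left, tsum_mul_left]
      _ = (∑' y, Dt (x - y) * u y ^ 2) - 2 * u x * (∑' y, Dt (x - y) * u y) + u x ^ 2 := by
          rw [tsum_mul_left, hDtransL_sum x, mul_one]
  -- key pointwise inequality : u x ^ 2 ≤ μ * A x
  have hkey : ∀ x, u x ^ 2 ≤ μ * ∑' y, Dt (x - y) * u y ^ 2 := by
    intro x
    have hV0 : 0 ≤ ∑' y, Dt (x - y) * (u y - u x) ^ 2 :=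
      tsum_nonneg fun y => mul_nonneg (hDpos _) (sq_nonneg _)
    rw [hVval x] at hV0
    have hux := hueq x
    have h3 : 0 ≤ μ * (∑' y, Dt (x - y) * u y ^ 2)
        - 2 * u x * (μ * (∑' y, Dt (x - y) * u y)) + μ * u x ^ 2 := by
      nlinarith [mul_nonneg hμpos.le hV0]
    rw [← hux] at h3
    nlinarith [sq_nonneg (u x)]
  -- Fubini in ENNReal
  have hofA : ∀ x, ENNReal.ofReal (∑' y, Dt (x - y) * u y ^ 2)
      = ∑' y, ENNReal.ofReal (Dt (x - y) * u y ^ 2) := fun x =>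
    ENNReal.ofReal_tsum_of_nonneg (fun y => mul_nonneg (hDpos _) (sq_nonneg _)) (hAsum x)
  have hswap : ∑' x, ENNReal.ofReal (∑' y, Dt (x - y) * u y ^ 2)
      = ∑' x, ENNReal.ofReal (u x ^ 2) := by
    calc ∑' x, ENNReal.ofReal (∑' y, Dt (x - y) * u y ^ 2)
        = ∑' x, ∑' y, ENNReal.ofReal (Dt (x - y) * u y ^ 2) := tsum_congr hofA
      _ = ∑' y, ∑' x, ENNReal.ofReal (Dt (x - y) * u y ^ 2) := ENNReal.tsum_comm
      _ = ∑' y, ENNReal.ofReal (u y ^ 2) := by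
          refine tsum_congr fun y => ?_
          calc ∑' x, ENNReal.ofReal (Dt (x - y) * u y ^ 2)
              = ∑' x, ENNReal.ofReal (Dt (x - y)) * ENNReal.ofReal (u y ^ 2) :=
                tsum_congr fun x => ENNReal.ofReal_mul (hDpos _)
            _ = (∑' x, ENNReal.ofReal (Dt (x - y))) * ENNReal.ofReal (u y ^ 2) :=
                ENNReal.tsum_mul_right
            _ = ENNReal.ofReal (u y ^ 2) := by
                rw [← ENNReal.ofReal_tsum_of_nonneg (fun x => hDpos _) (hDtransR y),
                  hDtransR_sum y, ENNReal.ofReal_one, one_mul]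
  have hTfin : ∑' x, ENNReal.ofReal (u x ^ 2) ≠ ⊤ := by
    rw [← ENNReal.ofReal_tsum_of_nonneg (fun x => sq_nonneg _) husq]
    exact ENNReal.ofReal_ne_top
  rcases hμ1.lt_or_eq with hlt | heq1
  · -- subcritical case μ < 1
    have hle : ∑' x, ENNReal.ofReal (u x ^ 2)
        ≤ ENNReal.ofReal μ * ∑' x, ENNReal.ofReal (u x ^ 2) := by
      calc ∑' x, ENNReal.ofReal (u x ^ 2)
          ≤ ∑' x, ENNReal.ofReal (μ * ∑' y, Dt (x - y) * u y ^ 2) :=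
            ENNReal.tsum_le_tsum fun x => ENNReal.ofReal_le_ofReal (hkey x)
        _ = ∑' x, ENNReal.ofReal μ * ENNReal.ofReal (∑' y, Dt (x - y) * u y ^ 2) :=
            tsum_congr fun x => ENNReal.ofReal_mul hμpos.le
        _ = ENNReal.ofReal μ * ∑' x, ENNReal.ofReal (∑' y, Dt (x - y) * u y ^ 2) :=
            ENNReal.tsum_mul_left
        _ = ENNReal.ofReal μ * ∑' x, ENNReal.ofReal (u x ^ 2) := by rw [hswap]
    have hT0 : ∑' x, ENNReal.ofReal (u x ^ 2) = 0 := by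
      by_contra hne
      have hlt1 : ENNReal.ofReal μ < 1 := ENNReal.ofReal_lt_one.mpr hlt
      have : ENNReal.ofReal μ * (∑' x, ENNReal.ofReal (u x ^ 2))
          < 1 * ∑' x, ENNReal.ofReal (u x ^ 2) :=
        (ENNReal.mul_lt_mul_iff_left hne hTfin).mpr hlt1
      rw [one_mul] at this
      exact absurd (lt_of_le_of_lt hle this) (lt_irrefl _)
    intro x
    have := ENNReal.tsum_eq_zero.mp hT0 x
    have := ENNReal.ofReal_eq_zero.mp this
    nlinarith [sq_nonneg (u x)]
  · -- critical case μ = 1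
    subst heq1
    simp only [one_mul] at hkey hueq
    -- pointwise equality A x = u x ^ 2
    have hAeq : ∀ x, (∑' y, Dt (x - y) * u y ^ 2) = u x ^ 2 := by
      intro x
      refine le_antisymm ?_ (hkey x)
      -- from total sum equality and pointwise ≤
      have hle : ∀ z, ENNReal.ofReal (u z ^ 2)
          ≤ ENNReal.ofReal (∑' y, Dt (z - y) * u y ^ 2) :=
        fun z => ENNReal.ofReal_le_ofReal (hkey z)
      by_contra hcon
      push_neg at hcon
      have hltE : ENNReal.ofReal (u x ^ 2) < ENNReal.ofReal (∑' y, Dt (x - y) * u y ^ 2) :=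
        ENNReal.ofReal_lt_ofReal_iff_of_nonneg (sq_nonneg _) |>.mpr hcon
      have hstrict : ∑' z, ENNReal.ofReal (u z ^ 2)
          < ∑' z, ENNReal.ofReal (∑' y, Dt (z - y) * u y ^ 2) :=
        ENNReal.tsum_lt_tsum hTfin hle hltE
      rw [hswap] at hstrict
      exact absurd hstrict (lt_irrefl _)
    -- each variance vanishes, giving local constancy on the support of Dt
    have hVzero : ∀ x y, Dt (x - y) * (u y - u x) ^ 2 = 0 := by
      intro x y
      have hV0 : ∑' y', Dt (x - y') * (u y' - u x) ^ 2 = 0 := by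
        rw [hVval x, hAeq x, ← hueq x]
        ring
      have hterm := Summable.le_tsum (hVsum x) y fun z _ => mul_nonneg (hDpos _) (sq_nonneg _)
      rw [hV0] at hterm
      have h0 := mul_nonneg (hDpos (x - y)) (sq_nonneg (u y - u x))
      linarith
    obtain ⟨z, hz⟩ : ∃ z, Dt z ≠ 0 := by
      by_contra h
      push_neg at h
      have : (1 : ℝ) = 0 := by rw [← hDsum]; simp only [h, tsum_zero]
      norm_num at this
    have hzne : z ≠ 0 := by
      intro h0; rw [h0, hD0] at hz; exact hz rfl
    have hper : ∀ x, u (x - z) = u x := by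
      intro x
      have h := hVzero x (x - z)
      have hxz : x - (x - z) = z := by abel
      rw [hxz] at h
      rcases mul_eq_zero.mp h with h' | h'
      · exact absurd h' hz
      · have h'' := sq_eq_zero_iff.mp h'
        linarith [h'']
    intro x
    have hiter : ∀ n : ℕ, u (x - n • z) = u x := by
      intro n
      induction n with
      | zero => simp
      | succ k ih =>
        have hstep : x - (k + 1) • z = (x - k • z) - z := by
          rw [add_smul, one_smul]; abel
        rw [hstep, hper, ih]
    obtain ⟨i, hi⟩ : ∃ i, z i ≠ 0 := by
      by_contra h
      push_neg at h
      exact hzne (funext h)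
    have hinj : Function.Injective (fun n : ℕ => x - n • z) := by
      intro a b hab
      simp only at hab
      have h1 : a • z = b • z := sub_right_injective hab
      have h2 := congrFun h1 i
      simp only [Pi.smul_apply, nsmul_eq_mul] at h2
      exact Nat.cast_injective (mul_right_cancel₀ hi h2)
    have hconst : Summable (fun _ : ℕ => u x ^ 2) :=
      (husq.comp_injective hinj).congr fun n => by
        simp only [Function.comp]
        rw [hiter n]
    have hx0 : u x ^ 2 = 0 := by
      by_contra h
      have ht := hconst.tendsto_cofinite_zero
      have h2 : Filter.Tendsto (fun _ : ℕ => u x ^ 2) Filter.cofinite (nhds (u x ^ 2)) :=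
        tendsto_const_nhds
      exact h (tendsto_nhds_unique ht h2).symm
    exact sq_eq_zero_iff.mp hx0
end

section
/- Let d > 2 and assume the heat-kernel bounds D̃^{*n}(x) ≤ C n (log⟨x⟩)/⟨x⟩^{d+2} for all n ≥ 1, x ≠ 0, and ‖D̃^{*n}‖_∞ ≤ C (n log n)^{−d/2} for n ≥ 2, where ⟨x⟩ = (π/2)max{|x|,1}. Then for |x| ≥ 2, ∑_{n=1}^∞ D̃^{*n}(x) ≤ C' / (⟨x⟩^{d−2} log⟨x⟩), with C' depending only on C and d. -/
open Real

/-- Euclidean norm of a point of `ℤ^d`. -/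
noncomputable def enorm' {d : ℕ} (x : Fin d → ℤ) : ℝ :=
  Real.sqrt (∑ i, ((x i : ℝ)) ^ 2)

/-- Truncated norm `⟨x⟩ = (π/2) max{|x|, 1}` on `ℤ^d`. -/
noncomputable def nn1' {d : ℕ} (x : Fin d → ℤ) : ℝ :=
  (π / 2) * max (enorm' x) 1

/-- Bernoulli-type step: `(s-1) m^{-s} ≤ (m-1)^{1-s} - m^{1-s}` for `s > 1`, `m ≥ 2`. -/
lemma aux_step {s m : ℝ} (hs : 1 < s) (hm : 2 ≤ m) :
    (s - 1) * m ^ (-s) ≤ (m - 1) ^ (1 - s) - m ^ (1 - s) := by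
  set p := s - 1 with hp
  have hp0 : 0 < p := by simp [hp]; linarith
  have hm0 : 0 < m := by linarith
  have hm1 : 0 < m - 1 := by linarith
  have key : 1 + p / m ≤ (m / (m - 1)) ^ p := by
    rcases le_or_gt 1 p with h1 | h1
    · have hb := one_add_mul_self_le_rpow_one_add (s := 1 / (m - 1))
        (by have : (0:ℝ) < 1 / (m - 1) := by positivity
            linarith) h1
      have heq : 1 + 1 / (m - 1) = m / (m - 1) := by field_simp; ring
      calc 1 + p / m ≤ 1 + p * (1 / (m - 1)) := by
            rw [mul_one_div]
            have : p / m ≤ p / (m - 1) := by gcongr; linarith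
            linarith
        _ ≤ (1 + 1 / (m - 1)) ^ p := hb
        _ = (m / (m - 1)) ^ p := by rw [heq]
    · have hmi : 1 / m ≤ 1 := by rw [div_le_one hm0]; linarith
      have hb := rpow_one_add_le_one_add_mul_self (s := -(1 / m)) (by linarith) hp0.le h1.le
      have h1m : 1 + -(1 / m) = (m - 1) / m := by field_simp; ring
      rw [h1m] at hb
      have hbb : ((m - 1) / m) ^ p ≤ 1 - p / m := by
        calc ((m-1)/m) ^ p ≤ 1 + p * -(1/m) := hb
          _ = 1 - p / m := by ring
      have hpm : 0 < 1 - p / m := by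
        have : p / m < 1 := by
          have : p / m ≤ p / 2 := by gcongr
          linarith
        linarith
      have hpow : (0:ℝ) < ((m - 1) / m) ^ p := rpow_pos_of_pos (by positivity) _
      have hinv : (1 - p / m)⁻¹ ≤ (m / (m - 1)) ^ p := by
        have hrw : (m / (m - 1)) ^ p = (((m - 1) / m) ^ p)⁻¹ := by
          rw [← Real.inv_rpow (by positivity), inv_div]
        rw [hrw]
        exact inv_anti₀ hpow hbb
      have : 1 + p / m ≤ (1 - p / m)⁻¹ := by
        rw [inv_eq_one_div, le_div_iff₀ hpm]
        nlinarith [sq_nonneg (p / m)]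
      linarith
  -- now derive
  set A := m ^ p with hA
  set B := (m - 1) ^ p with hB
  have hApos : 0 < A := rpow_pos_of_pos hm0 _
  have hBpos : 0 < B := rpow_pos_of_pos hm1 _
  have hfrac : (m / (m - 1)) ^ p = A / B := Real.div_rpow hm0.le hm1.le p
  have key2 : (1 + p / m) * B ≤ A := by
    rw [hfrac, le_div_iff₀ hBpos] at key
    exact key
  have h1 : m ^ (-s) = (A * m)⁻¹ := by
    rw [show -s = -(p + 1) by rw [hp]; ring, Real.rpow_neg hm0.le,
      Real.rpow_add hm0, Real.rpow_one]
  have h2 : m ^ (1 - s) = A⁻¹ := by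
    rw [show (1 : ℝ) - s = -p by rw [hp]; ring, Real.rpow_neg hm0.le]
  have h3 : (m - 1) ^ (1 - s) = B⁻¹ := by
    rw [show (1 : ℝ) - s = -p by rw [hp]; ring, Real.rpow_neg hm1.le]
  rw [h1, h2, h3]
  have hgoal : p / (A * m) ≤ 1 / B - 1 / A := by
    rw [div_sub_div _ _ hBpos.ne' hApos.ne', div_le_div_iff₀ (by positivity) (by positivity)]
    have h4 := mul_le_mul_of_nonneg_right key2 hm0.le
    have h5 : (1 + p / m) * B * m = B * m + p * B := by field_simp
    nlinarith [h4, h5, hApos, hBpos, hm0, mul_le_mul_of_nonneg_right (h5 ▸ h4) hApos.le]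
  calc p * (A * m)⁻¹ = p / (A * m) := by rw [div_eq_mul_inv]
    _ ≤ 1 / B - 1 / A := hgoal
    _ = B⁻¹ - A⁻¹ := by rw [one_div, one_div]

/-- Telescoping tail bound. -/
lemma tail_sum {s : ℝ} (hs : 1 < s) {N : ℕ} (hN : 1 ≤ N) (M : ℕ) :
    ∑ i ∈ Finset.Ico N M, (s - 1) * ((i : ℝ) + 1) ^ (-s) ≤ (N : ℝ) ^ (1 - s) := by
  rcases le_or_gt M N with h | h
  · rw [Finset.Ico_eq_empty (by omega)]
    simp [Real.rpow_nonneg (by positivity : (0:ℝ) ≤ (N:ℝ))]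
  · have tel : ∀ K, N ≤ K → ∑ i ∈ Finset.Ico N K,
        ((i : ℝ) ^ (1 - s) - ((i : ℝ) + 1) ^ (1 - s)) = (N : ℝ) ^ (1 - s) - (K : ℝ) ^ (1 - s) := by
      intro K
      induction K with
      | zero => intro hK; exact absurd hK (by omega)
      | succ K ih =>
        intro hK
        rcases le_or_gt N K with hNK | hNK
        · rw [Finset.sum_Ico_succ_top hNK, ih hNK]
          push_cast
          ring
        · have : N = K + 1 := by omega
          simp [this]
    calc ∑ i ∈ Finset.Ico N M, (s - 1) * ((i : ℝ) + 1) ^ (-s)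
        ≤ ∑ i ∈ Finset.Ico N M, ((i : ℝ) ^ (1 - s) - ((i : ℝ) + 1) ^ (1 - s)) := by
          apply Finset.sum_le_sum
          intro i hi
          have hi1 : 1 ≤ i := le_trans hN (Finset.mem_Ico.mp hi).1
          have := aux_step hs (m := (i : ℝ) + 1) (by exact_mod_cast Nat.succ_le_succ hi1)
          simpa using this
      _ = (N : ℝ) ^ (1 - s) - (M : ℝ) ^ (1 - s) := tel M h.le
      _ ≤ (N : ℝ) ^ (1 - s) := by
          have := Real.rpow_nonneg (by positivity : (0:ℝ) ≤ (M:ℝ)) (1 - s)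
          linarith

lemma iterConv_nonneg {d : ℕ} {f : (Fin d → ℤ) → ℝ} (hf : ∀ x, 0 ≤ f x) (n : ℕ) :
    ∀ x, 0 ≤ iterConv f n x := by
  induction n with
  | zero => intro x; simp only [iterConv]; split <;> norm_num
  | succ n ih =>
    intro x
    simp only [iterConv, conv']
    exact tsum_nonneg fun y => mul_nonneg (hf _) (ih _)

/-- the `α = 2` critical random walk bound with logarithmic correction:
from `D̃^{*n}(x) ≤ C n log⟨x⟩/⟨x⟩^{d+2}` (`n ≥ 1`, `x ≠ 0`) and
`‖D̃^{*n}‖_∞ ≤ C (n log n)^{−d/2}` (`n ≥ 2`), one gets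
`∑_{n≥1} D̃^{*n}(x) ≤ C'/(⟨x⟩^{d−2} log⟨x⟩)` for `|x| ≥ 2`. -/
theorem stmt15 (d : ℕ) (hd : 2 < (d : ℝ))
    (Dt : (Fin d → ℤ) → ℝ) (hDpos : ∀ x, 0 ≤ Dt x) (hDsum : ∑' x, Dt x = 1)
    (C : ℝ) (hC : 0 < C)
    (hx_bd : ∀ n : ℕ, 1 ≤ n → ∀ x : Fin d → ℤ, x ≠ 0 →
      iterConv Dt n x ≤ C * n * Real.log (nn1' x) / nn1' x ^ ((d : ℝ) + 2))
    (hsup_bd : ∀ n : ℕ, 2 ≤ n → ∀ x : Fin d → ℤ,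
      iterConv Dt n x ≤ C * ((n : ℝ) * Real.log n) ^ (-(d : ℝ) / 2)) :
    ∃ C' : ℝ, 0 < C' ∧ ∀ x : Fin d → ℤ, 2 ≤ enorm' x →
      ∑' n : ℕ, iterConv Dt (n + 1) x ≤
        C' / (nn1' x ^ ((d : ℝ) - 2) * Real.log (nn1' x)) := by
  have hd2 : (0:ℝ) < (d : ℝ) - 2 := by linarith
  obtain ⟨s, hs_def⟩ : ∃ s : ℝ, s = (d : ℝ) / 2 := ⟨_, rfl⟩
  have hs1 : 1 < s := by rw [hs_def]; linarith
  have hs0 : s - 1 ≠ 0 := ne_of_gt (by linarith)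
  refine ⟨4 * C + 2 * C / ((d : ℝ) - 2), ?_, ?_⟩
  · have h1 : 0 < 2 * C / ((d : ℝ) - 2) := by positivity
    linarith
  intro x hx
  set t : ℝ := nn1' x with ht_def
  -- basic facts about t
  have hxne : x ≠ 0 := by
    intro h
    rw [h] at hx
    simp [enorm'] at hx
    linarith
  have hmax2 : 2 ≤ max (enorm' x) 1 := le_trans hx (le_max_left _ _)
  have htpi : π ≤ t := by
    rw [ht_def, nn1']
    nlinarith [Real.pi_pos]
  have ht0 : 0 < t := lt_of_lt_of_le Real.pi_pos htpi
  have ht1 : 1 < t := by nlinarith [Real.pi_gt_three]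
  have hlog1 : 1 ≤ Real.log t := by
    rw [Real.le_log_iff_exp_le ht0]
    have h1 := Real.exp_one_lt_d9
    have h2 := Real.pi_gt_d6
    linarith
  have hlogpos : 0 < Real.log t := lt_of_lt_of_le one_pos hlog1
  have hlogle : Real.log t ≤ t := by
    have := Real.log_le_sub_one_of_pos ht0
    linarith
  -- the splitting point
  set u : ℝ := t ^ 2 / Real.log t with hu_def
  have hu1 : 1 ≤ u := by
    rw [hu_def, le_div_iff₀ hlogpos]
    nlinarith
  have hu0 : 0 < u := lt_of_lt_of_le one_pos hu1
  set N : ℕ := ⌈u⌉₊ with hN_def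
  have hNu : u ≤ (N : ℝ) := Nat.le_ceil u
  have hN2u : (N : ℝ) ≤ 2 * u := by
    have := (Nat.ceil_lt_add_one hu0.le).le
    rw [← hN_def] at this
    linarith
  have hN1 : 1 ≤ N := by
    rw [hN_def]
    exact Nat.one_le_ceil_iff.mpr hu0
  -- positivity of main quantities
  set P : ℝ := t ^ ((d : ℝ) - 2) with hP_def
  have hPpos : 0 < P := Real.rpow_pos_of_pos ht0 _
  set X : ℝ := P * Real.log t with hX_def
  have hXpos : 0 < X := mul_pos hPpos hlogpos
  have hsplit : t ^ ((d : ℝ) + 2) = P * t ^ 4 := by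
    rw [hP_def, show ((d:ℝ) + 2) = ((d:ℝ) - 2) + ((4:ℕ):ℝ) by push_cast; ring,
      Real.rpow_add ht0, Real.rpow_natCast]
  have htd2pos : 0 < t ^ ((d : ℝ) + 2) := Real.rpow_pos_of_pos ht0 _
  -- near bound
  have hnear : ∀ K : ℕ, K ≤ N →
      ∑ i ∈ Finset.range K, iterConv Dt (i + 1) x ≤ 4 * C / X := by
    intro K hK
    have hNlog : (N : ℝ) * Real.log t ≤ 2 * t ^ 2 := by
      have h := mul_le_mul_of_nonneg_right hN2u hlogpos.le
      rw [hu_def] at h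
      calc (N : ℝ) * Real.log t ≤ 2 * (t ^ 2 / Real.log t) * Real.log t := h
        _ = 2 * t ^ 2 := by field_simp
    calc ∑ i ∈ Finset.range K, iterConv Dt (i + 1) x
        ≤ ∑ i ∈ Finset.range K, C * ((i : ℝ) + 1) * Real.log t / t ^ ((d : ℝ) + 2) := by
          apply Finset.sum_le_sum
          intro i _
          have h := hx_bd (i + 1) (by omega) x hxne
          rw [← ht_def] at h
          push_cast at h
          exact h
      _ ≤ ∑ i ∈ Finset.range K, C * (N : ℝ) * Real.log t / t ^ ((d : ℝ) + 2) := by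
          apply Finset.sum_le_sum
          intro i hi
          have hle : (i : ℝ) + 1 ≤ (N : ℝ) := by
            have h' : i + 1 ≤ N := by
              have := Finset.mem_range.mp hi
              omega
            exact_mod_cast h'
          gcongr
      _ = (K : ℝ) * (C * (N : ℝ) * Real.log t / t ^ ((d : ℝ) + 2)) := by
          rw [Finset.sum_const, Finset.card_range, nsmul_eq_mul]
      _ ≤ (N : ℝ) * (C * (N : ℝ) * Real.log t / t ^ ((d : ℝ) + 2)) := by
          have hKN : (K : ℝ) ≤ (N : ℝ) := by exact_mod_cast hK
          gcongr
      _ ≤ 4 * C / X := by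
          rw [← mul_div_assoc, div_le_div_iff₀ htd2pos hXpos, hsplit, hX_def]
          have hsq : ((N : ℝ) * Real.log t) ^ 2 ≤ (2 * t ^ 2) ^ 2 := by
            apply pow_le_pow_left₀ (by positivity) hNlog
          calc (N : ℝ) * (C * (N : ℝ) * Real.log t) * (P * Real.log t)
              = (C * P) * (((N : ℝ) * Real.log t) ^ 2) := by ring
            _ ≤ (C * P) * ((2 * t ^ 2) ^ 2) := by
                apply mul_le_mul_of_nonneg_left hsq (by positivity)
            _ = 4 * C * (P * t ^ 4) := by ring
  -- the crucial rpow computation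
  have hcalc : Real.log t ^ (-s) * u ^ (1 - s) = X⁻¹ := by
    rw [hu_def, Real.div_rpow (by positivity) hlogpos.le]
    rw [show (t : ℝ) ^ 2 = t ^ ((2:ℕ):ℝ) by rw [Real.rpow_natCast],
      ← Real.rpow_mul ht0.le]
    rw [div_eq_mul_inv, ← Real.rpow_neg hlogpos.le]
    rw [mul_comm (Real.log t ^ (-s)), mul_assoc, ← Real.rpow_add hlogpos]
    have he1 : ((2:ℕ):ℝ) * (1 - s) = -((d:ℝ) - 2) := by
      push_cast [hs_def]; ring
    have he2 : -(1 - s) + -s = -1 := by ring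
    rw [he1, he2, Real.rpow_neg ht0.le, Real.rpow_neg_one, hX_def, hP_def, mul_inv]
  -- far bound
  have hfar : ∀ M : ℕ, N ≤ M →
      ∑ i ∈ Finset.Ico N M, iterConv Dt (i + 1) x ≤ (2 * C / ((d : ℝ) - 2)) / X := by
    intro M hM
    set K' : ℝ := C * Real.log t ^ (-s) / (s - 1) with hK'_def
    have hK'pos : 0 < K' := by
      rw [hK'_def]
      have := Real.rpow_pos_of_pos hlogpos (-s)
      have hs0 : 0 < s - 1 := by linarith
      positivity
    have hterm : ∀ i ∈ Finset.Ico N M,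
        iterConv Dt (i + 1) x ≤ K' * ((s - 1) * ((i : ℝ) + 1) ^ (-s)) := by
      intro i hi
      have hiN : N ≤ i := (Finset.mem_Ico.mp hi).1
      have h2i : 2 ≤ i + 1 := by omega
      have h := hsup_bd (i + 1) h2i x
      have hn1 : (1:ℝ) ≤ (i:ℝ) := by exact_mod_cast le_trans hN1 hiN
      have hnpos : (0:ℝ) < (i : ℝ) + 1 := by linarith
      have hlogn : Real.log t ≤ Real.log ((i : ℝ) + 1) := by
        have hun : u ≤ (i : ℝ) + 1 := by
          have : (N : ℝ) ≤ (i : ℝ) := by exact_mod_cast hiN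
          linarith
        have hlu : Real.log t ≤ Real.log u := by
          rw [hu_def, Real.log_div (by positivity) hlogpos.ne', Real.log_pow]
          have := Real.log_le_log hlogpos hlogle
          push_cast
          linarith
        exact le_trans hlu (Real.log_le_log hu0 hun)
      have hlognpos : 0 < Real.log ((i : ℝ) + 1) := lt_of_lt_of_le hlogpos hlogn
      have hcast : ((i + 1 : ℕ) : ℝ) = (i : ℝ) + 1 := by push_cast; ring
      rw [hcast] at h
      have hexp : -(d : ℝ) / 2 = -s := by rw [hs_def]; ring
      rw [hexp] at h
      calc iterConv Dt (i + 1) x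
          ≤ C * (((i : ℝ) + 1) * Real.log ((i : ℝ) + 1)) ^ (-s) := h
        _ = C * (((i : ℝ) + 1) ^ (-s) * Real.log ((i : ℝ) + 1) ^ (-s)) := by
            rw [Real.mul_rpow hnpos.le hlognpos.le]
        _ ≤ C * (((i : ℝ) + 1) ^ (-s) * Real.log t ^ (-s)) := by
            have := Real.rpow_le_rpow_of_nonpos hlogpos hlogn (by linarith : -s ≤ 0)
            gcongr
        _ = K' * ((s - 1) * ((i : ℝ) + 1) ^ (-s)) := by
            rw [hK'_def]
            field_simp
    calc ∑ i ∈ Finset.Ico N M, iterConv Dt (i + 1) x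
        ≤ ∑ i ∈ Finset.Ico N M, K' * ((s - 1) * ((i : ℝ) + 1) ^ (-s)) :=
          Finset.sum_le_sum hterm
      _ = K' * ∑ i ∈ Finset.Ico N M, (s - 1) * ((i : ℝ) + 1) ^ (-s) := by
          rw [Finset.mul_sum]
      _ ≤ K' * (N : ℝ) ^ (1 - s) := by
          apply mul_le_mul_of_nonneg_left (tail_sum hs1 hN1 M) hK'pos.le
      _ ≤ K' * u ^ (1 - s) := by
          have := Real.rpow_le_rpow_of_nonpos hu0 hNu (by linarith : 1 - s ≤ 0)
          gcongr
      _ = C * (s - 1)⁻¹ * (Real.log t ^ (-s) * u ^ (1 - s)) := by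
          rw [hK'_def]
          ring
      _ = C * (s - 1)⁻¹ * X⁻¹ := by rw [hcalc]
      _ = (2 * C / ((d : ℝ) - 2)) / X := by
          have hsc : C * (s - 1)⁻¹ = 2 * C / ((d : ℝ) - 2) := by
            rw [hs_def, eq_div_iff hd2.ne']
            have h20 : ((d : ℝ) / 2 - 1) ≠ 0 := by
              intro h
              have : (d : ℝ) = 2 := by linarith [sub_eq_zero.mp h]
              linarith
            field_simp
          rw [hsc]
          ring
  -- assemble
  have hpartial : ∀ M : ℕ, ∑ i ∈ Finset.range M, iterConv Dt (i + 1) x ≤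
      (4 * C + 2 * C / ((d : ℝ) - 2)) / X := by
    intro M
    have hsum : 4 * C / X + (2 * C / ((d : ℝ) - 2)) / X = (4 * C + 2 * C / ((d : ℝ) - 2)) / X := by
      rw [← add_div]
    rcases le_or_gt M N with h | h
    · have h2 : 0 ≤ (2 * C / ((d : ℝ) - 2)) / X := by positivity
      have := hnear M h
      linarith
    · rw [Finset.range_eq_Ico, ← Finset.sum_Ico_consecutive _ (Nat.zero_le N) h.le]
      have h1 : ∑ i ∈ Finset.Ico 0 N, iterConv Dt (i + 1) x ≤ 4 * C / X := by
        rw [← Finset.range_eq_Ico]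
        exact hnear N le_rfl
      have h2 := hfar M h.le
      linarith
  have := Real.tsum_le_of_sum_range_le
    (f := fun n => iterConv Dt (n + 1) x)
    (fun n => iterConv_nonneg hDpos (n + 1) x) hpartial
  simpa using this
end
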